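/- arXiv:1807.03483 — 6 statements merged into one kernel-verified Lean document; each statement's English description precedes it below -/
import Mathlib

section
/- Let N ≥ 1, let φ : ℝ^N → ℝ, and let v⁻, v⁰, v⁺ ∈ ℝ^N. Suppose u₊, u₋ ∈ ℝ^N satisfy the entropy-conservation conditions ⟨v⁺ − v⁰, u₊⟩ = φ(v⁺) − φ(v⁰) and ⟨v⁰ − v⁻, u₋⟩ = φ(v⁰) − φ(v⁻). Define the numerical entropy fluxes Û₊ = ½⟨v⁰ + v⁺, u₊⟩ − ½(φ(v⁰) + φ(v⁺)) and Û₋ = ½⟨v⁻ + v⁰, u₋⟩ − ½(φ(v⁻) + φ(v⁰)). Then ⟨v⁰, u₊ − u₋⟩ = Û₊ − Û₋. -/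
open RealInnerProductSpace

section EntropyFlux

variable {E : Type*} [NormedAddCommGroup E] [InnerProductSpace ℝ E]

noncomputable def entropyFlux (φ : E → ℝ) (a b u : E) : ℝ :=
  (1 / 2 : ℝ) * ⟪a + b, u⟫ - (1 / 2 : ℝ) * (φ a + φ b)

variable {φ : E → ℝ} {a b u : E}

/- Entropy conservation `⟪b - a, u⟫ = φ b - φ a` says exactly that `⟪·, u⟫ - φ` takes the same
value at both states; the numerical entropy flux is the average of the two. -/
theorem entropyFlux_eq_inner_left_sub (h : ⟪b - a, u⟫ = φ b - φ a) :
    entropyFlux φ a b u = ⟪a, u⟫ - φ a := by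
  rw [inner_sub_left] at h
  rw [entropyFlux, inner_add_left]
  linarith

theorem entropyFlux_eq_inner_right_sub (h : ⟪b - a, u⟫ = φ b - φ a) :
    entropyFlux φ a b u = ⟪b, u⟫ - φ b := by
  rw [inner_sub_left] at h
  rw [entropyFlux, inner_add_left]
  linarith

end EntropyFlux

theorem temporal_entropy_conservation_general (N : ℕ)
    (φ : EuclideanSpace ℝ (Fin N) → ℝ)
    (vm v0 vp : EuclideanSpace ℝ (Fin N))
    (up um : EuclideanSpace ℝ (Fin N))
    (hup : ⟪vp - v0, up⟫ = φ vp - φ v0)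
    (hum : ⟪v0 - vm, um⟫ = φ v0 - φ vm) :
    ⟪v0, up - um⟫ =
      ((1 / 2 : ℝ) * ⟪v0 + vp, up⟫ - (1 / 2 : ℝ) * (φ v0 + φ vp)) -
      ((1 / 2 : ℝ) * ⟪vm + v0, um⟫ - (1 / 2 : ℝ) * (φ vm + φ v0)) := by
  change ⟪v0, up - um⟫ = entropyFlux φ v0 vp up - entropyFlux φ vm v0 um
  rw [entropyFlux_eq_inner_left_sub hup, entropyFlux_eq_inner_right_sub hum, inner_sub_right]
  ring

/-- If the temporal fluxes `u₊, u₋` are entropy conservative with respect to the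
potential `φ` across the `n+1/2` and `n-1/2` interfaces, then the scheme satisfies
a discrete entropy conservation identity with consistent numerical entropy fluxes. -/
theorem temporal_entropy_conservation (N : ℕ) (hN : 1 ≤ N)
    (φ : EuclideanSpace ℝ (Fin N) → ℝ)
    (vm v0 vp : EuclideanSpace ℝ (Fin N))
    (up um : EuclideanSpace ℝ (Fin N))
    (hup : ⟪vp - v0, up⟫ = φ vp - φ v0)
    (hum : ⟪v0 - vm, um⟫ = φ v0 - φ vm) :
    ⟪v0, up - um⟫ =
      ((1 / 2 : ℝ) * ⟪v0 + vp, up⟫ - (1 / 2 : ℝ) * (φ v0 + φ vp)) -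
      ((1 / 2 : ℝ) * ⟪vm + v0, um⟫ - (1 / 2 : ℝ) * (φ vm + φ v0)) :=
  temporal_entropy_conservation_general N φ vm v0 vp up um hup hum
end

section
/- Let N ≥ 1, let φ : ℝ^N → ℝ, and let v⁻, v⁰, v⁺ ∈ ℝ^N. Suppose u*₊, u*₋ ∈ ℝ^N satisfy ⟨v⁺ − v⁰, u*₊⟩ = φ(v⁺) − φ(v⁰) and ⟨v⁰ − v⁻, u*₋⟩ = φ(v⁰) − φ(v⁻), and let T₊, T₋ : ℝ^N → ℝ^N be continuous linear maps. Define the entropy-stable temporal fluxes u₊ = u*₊ − T₊(v⁺ − v⁰) and u₋ = u*₋ − T₋(v⁰ − v⁻), and the modified numerical entropy fluxes Û'₊ = ½⟨v⁰ + v⁺, u*₊⟩ − ½(φ(v⁰) + φ(v⁺)) − ½⟨v⁰ + v⁺, T₊(v⁺ − v⁰)⟩ and Û'₋ = ½⟨v⁻ + v⁰, u*₋⟩ − ½(φ(v⁻) + φ(v⁰)) − ½⟨v⁻ + v⁰, T₋(v⁰ − v⁻)⟩. Then ⟨v⁰, u₊ − u₋⟩ = Û'₊ − Û'₋ + ½⟨v⁺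 − v⁰, T₊(v⁺ − v⁰)⟩ + ½⟨v⁰ − v⁻, T₋(v⁰ − v⁻)⟩; in particular, if T₊ and T₋ are positive semidefinite (⟨x, T x⟩ ≥ 0 for all x), then ⟨v⁰, u₊ − u₋⟩ ≥ Û'₊ − Û'₋. -/
open RealInnerProductSpace

/-!
Split `⟪v, f⟫` at an interface with states `vL`, `vR` as `½⟪vL + vR, f⟫ ± ½⟪vR - vL, f⟫`.
For `f = u* - d` the mean part, shifted by `½(φ vL + φ vR)`, is the modified entropy flux,
while entropy conservation of `u*` turns `½⟪vR - vL, u*⟫` into `½(φ vR - φ vL)`. So `⟪vL, f⟫`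
and `⟪vR, f⟫` are the entropy flux plus `φ vL`, resp. `φ vR`, up to `±½⟪vR - vL, d⟫`. The
central cell `v⁰` is the left state of the `+` interface and the right state of the `-` one:
the `φ v⁰` cancel and the two quadratic dissipation terms remain with a plus sign.
-/

namespace TemporalFlux

variable {E : Type*} [NormedAddCommGroup E] [InnerProductSpace ℝ E]

/-- The entropy flux `Û'` of the flux `ustar - d` between the states `vL` and `vR`. -/
noncomputable def modifiedEntropyFlux (φ : E → ℝ) (ustar d vL vR : E) : ℝ :=
  (1 / 2 : ℝ) * ⟪vL + vR, ustar⟫ - (1 / 2 : ℝ) * (φ vL + φ vR) - (1 / 2 : ℝ) * ⟪vL + vR, d⟫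

section Interface

variable {φ : E → ℝ} {ustar vL vR : E}

theorem inner_left_sub_eq_modifiedEntropyFlux (h : ⟪vR - vL, ustar⟫ = φ vR - φ vL) (d : E) :
    ⟪vL, ustar - d⟫ =
      modifiedEntropyFlux φ ustar d vL vR + φ vL + (1 / 2 : ℝ) * ⟪vR - vL, d⟫ := by
  simp only [modifiedEntropyFlux, inner_sub_left, inner_add_left, inner_sub_right] at h ⊢
  linarith

theorem inner_right_sub_eq_modifiedEntropyFlux (h : ⟪vR - vL, ustar⟫ = φ vR - φ vL) (d : E) :
    ⟪vR, ustar - d⟫ =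
      modifiedEntropyFlux φ ustar d vL vR + φ vR - (1 / 2 : ℝ) * ⟪vR - vL, d⟫ := by
  simp only [modifiedEntropyFlux, inner_sub_left, inner_add_left, inner_sub_right] at h ⊢
  linarith

end Interface

theorem inner_sub_fluxes_eq {φ : E → ℝ} {vm v0 vp ustarp ustarm : E}
    (hup : ⟪vp - v0, ustarp⟫ = φ vp - φ v0) (hum : ⟪v0 - vm, ustarm⟫ = φ v0 - φ vm)
    (dp dm : E) :
    ⟪v0, (ustarp - dp) - (ustarm - dm)⟫ =
      modifiedEntropyFlux φ ustarp dp v0 vp - modifiedEntropyFlux φ ustarm dm vm v0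
        + (1 / 2 : ℝ) * ⟪vp - v0, dp⟫ + (1 / 2 : ℝ) * ⟪v0 - vm, dm⟫ := by
  rw [inner_sub_right, inner_left_sub_eq_modifiedEntropyFlux hup,
    inner_right_sub_eq_modifiedEntropyFlux hum]
  ring

end TemporalFlux

theorem temporal_entropy_stability_general (N : ℕ)
    (φ : EuclideanSpace ℝ (Fin N) → ℝ)
    (vm v0 vp : EuclideanSpace ℝ (Fin N))
    (ustarp ustarm : EuclideanSpace ℝ (Fin N))
    (Tp Tm : EuclideanSpace ℝ (Fin N) →L[ℝ] EuclideanSpace ℝ (Fin N))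
    (hup : ⟪vp - v0, ustarp⟫ = φ vp - φ v0)
    (hum : ⟪v0 - vm, ustarm⟫ = φ v0 - φ vm) :
    (⟪v0, (ustarp - Tp (vp - v0)) - (ustarm - Tm (v0 - vm))⟫ =
      (((1 / 2 : ℝ) * ⟪v0 + vp, ustarp⟫ - (1 / 2 : ℝ) * (φ v0 + φ vp)
          - (1 / 2 : ℝ) * ⟪v0 + vp, Tp (vp - v0)⟫) -
       ((1 / 2 : ℝ) * ⟪vm + v0, ustarm⟫ - (1 / 2 : ℝ) * (φ vm + φ v0)
          - (1 / 2 : ℝ) * ⟪vm + v0, Tm (v0 - vm)⟫))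
      + (1 / 2 : ℝ) * ⟪vp - v0, Tp (vp - v0)⟫
      + (1 / 2 : ℝ) * ⟪v0 - vm, Tm (v0 - vm)⟫)
    ∧ ((∀ x, 0 ≤ ⟪x, Tp x⟫) → (∀ x, 0 ≤ ⟪x, Tm x⟫) →
        ⟪v0, (ustarp - Tp (vp - v0)) - (ustarm - Tm (v0 - vm))⟫ ≥
          (((1 / 2 : ℝ) * ⟪v0 + vp, ustarp⟫ - (1 / 2 : ℝ) * (φ v0 + φ vp)
              - (1 / 2 : ℝ) * ⟪v0 + vp, Tp (vp - v0)⟫) -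
           ((1 / 2 : ℝ) * ⟪vm + v0, ustarm⟫ - (1 / 2 : ℝ) * (φ vm + φ v0)
              - (1 / 2 : ℝ) * ⟪vm + v0, Tm (v0 - vm)⟫))) := by
  have balance := TemporalFlux.inner_sub_fluxes_eq hup hum (Tp (vp - v0)) (Tm (v0 - vm))
  simp only [TemporalFlux.modifiedEntropyFlux] at balance
  refine ⟨balance, fun hTp hTm => ?_⟩
  rw [balance]
  linarith [hTp (vp - v0), hTm (v0 - vm)]

/-- Adding a dissipation term `T Δv` with `T` positive semidefinite to an entropy
conservative temporal flux yields an entropy stable temporal flux: the entropy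
balance acquires nonnegative production terms `½ Δvᵀ T Δv`. -/
theorem temporal_entropy_stability (N : ℕ) (hN : 1 ≤ N)
    (φ : EuclideanSpace ℝ (Fin N) → ℝ)
    (vm v0 vp : EuclideanSpace ℝ (Fin N))
    (ustarp ustarm : EuclideanSpace ℝ (Fin N))
    (Tp Tm : EuclideanSpace ℝ (Fin N) →L[ℝ] EuclideanSpace ℝ (Fin N))
    (hup : ⟪vp - v0, ustarp⟫ = φ vp - φ v0)
    (hum : ⟪v0 - vm, ustarm⟫ = φ v0 - φ vm) :
    (⟪v0, (ustarp - Tp (vp - v0)) - (ustarm - Tm (v0 - vm))⟫ =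
      (((1 / 2 : ℝ) * ⟪v0 + vp, ustarp⟫ - (1 / 2 : ℝ) * (φ v0 + φ vp)
          - (1 / 2 : ℝ) * ⟪v0 + vp, Tp (vp - v0)⟫) -
       ((1 / 2 : ℝ) * ⟪vm + v0, ustarm⟫ - (1 / 2 : ℝ) * (φ vm + φ v0)
          - (1 / 2 : ℝ) * ⟪vm + v0, Tm (v0 - vm)⟫))
      + (1 / 2 : ℝ) * ⟪vp - v0, Tp (vp - v0)⟫
      + (1 / 2 : ℝ) * ⟪v0 - vm, Tm (v0 - vm)⟫)
    ∧ ((∀ x, 0 ≤ ⟪x, Tp x⟫) → (∀ x, 0 ≤ ⟪x, Tm x⟫) →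
        ⟪v0, (ustarp - Tp (vp - v0)) - (ustarm - Tm (v0 - vm))⟫ ≥
          (((1 / 2 : ℝ) * ⟪v0 + vp, ustarp⟫ - (1 / 2 : ℝ) * (φ v0 + φ vp)
              - (1 / 2 : ℝ) * ⟪v0 + vp, Tp (vp - v0)⟫) -
           ((1 / 2 : ℝ) * ⟪vm + v0, ustarm⟫ - (1 / 2 : ℝ) * (φ vm + φ v0)
              - (1 / 2 : ℝ) * ⟪vm + v0, Tm (v0 - vm)⟫))) :=
  temporal_entropy_stability_general N φ vm v0 vp ustarp ustarm Tp Tm hup hum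
end

section
/- Let γ > 1 and let (ρ_L, u_L, p_L) and (ρ_R, u_R, p_R) be two states with ρ_L, ρ_R, p_L, p_R > 0. Define for each state z₁ = √(ρ/p), z₂ = u√(ρ/p), z₃ = √(ρp) and the entropy variables v = (v₁, v₂, v₃) = ((γ − S)/(γ−1) − ρu²/(2p), ρu/p, −ρ/p) with S = log p − γ log ρ. Write [a] = a_R − a_L and ā = (a_L + a_R)/2. Then: (a) [v₂] = z̄₁[z₂] + z̄₂[z₁]; (b) [v₃] = −2 z̄₁ [z₁]; and (c) if moreover z₁_L ≠ z₁_R and z₃_L ≠ z₃_R, then [v₁] = [z₃]/z₃^{ln} − ((1+γ)/(1−γ)) [z₁]/z₁^{ln} − z̄₂[z₂], where a^{ln} = (a_R − a_L)/(log a_R − log a_L) is the logarithmic mean. -/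
/-!
Each entropy variable is a simple function of the Roe variables: `v₂ = z₁ z₂`, `v₃ = -z₁²`
and `v₁ = γ/(γ-1) + log z₃ - ((1+γ)/(1-γ)) log z₁ - z₂²/2`. The jumps then follow from the
discrete product rule `[ab] = ā[b] + b̄[a]` and from `[log a] = [a]/a^{ln}`, which is the
definition of the logarithmic mean.
-/

open Real

theorem mul_sub_mul_eq_mean_mul_sub_add_mean_mul_sub (a b a' b' : ℝ) :
    a' * b' - a * b = (a + a') / 2 * (b' - b) + (b + b') / 2 * (a' - a) := by
  ring

section RoeVariables

variable {ρ p : ℝ} (hρ : 0 < ρ) (hp : 0 < p)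
include hρ hp

theorem sq_sqrt_div_of_pos : √(ρ / p) ^ 2 = ρ / p :=
  sq_sqrt (div_pos hρ hp).le

theorem mul_div_eq_sqrt_div_mul_mul_sqrt_div (u : ℝ) :
    ρ * u / p = √(ρ / p) * (u * √(ρ / p)) := by
  rw [mul_left_comm, ← sq, sq_sqrt_div_of_pos hρ hp]
  ring

theorem mul_sq_div_two_mul_eq_sq_div_two (u : ℝ) :
    ρ * u ^ 2 / (2 * p) = (u * √(ρ / p)) ^ 2 / 2 := by
  rw [mul_pow, sq_sqrt_div_of_pos hρ hp]
  ring

theorem log_sqrt_div_of_pos : log √(ρ / p) = (log ρ - log p) / 2 := by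
  rw [log_sqrt (div_pos hρ hp).le, log_div hρ.ne' hp.ne']

theorem log_sqrt_mul_of_pos : log √(ρ * p) = (log ρ + log p) / 2 := by
  rw [log_sqrt (mul_pos hρ hp).le, log_mul hρ.ne' hp.ne']

theorem entropyV1_eq_roe {γ : ℝ} (hγ : γ ≠ 1) (u : ℝ) :
    (γ - (log p - γ * log ρ)) / (γ - 1) - ρ * u ^ 2 / (2 * p)
      = γ / (γ - 1) + log √(ρ * p) - (1 + γ) / (1 - γ) * log √(ρ / p)
        - (u * √(ρ / p)) ^ 2 / 2 := by
  have hγ₁ : γ - 1 ≠ 0 := sub_ne_zero.2 hγ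
  have hγ₂ : 1 - γ ≠ 0 := sub_ne_zero.2 hγ.symm
  rw [mul_sq_div_two_mul_eq_sq_div_two hρ hp, log_sqrt_mul_of_pos hρ hp,
    log_sqrt_div_of_pos hρ hp]
  field_simp
  ring

end RoeVariables

/-- Jump identities expressing the jumps of the Euler entropy variables in terms of
jumps and means of the Roe algebraic variables `z₁ = √(ρ/p)`, `z₂ = u√(ρ/p)`,
`z₃ = √(ρp)`: (a) `[v₂] = z̄₁[z₂] + z̄₂[z₁]`, (b) `[v₃] = −2 z̄₁[z₁]`, and
(c) `[v₁] = [z₃]/z₃ˡⁿ − ((1+γ)/(1−γ))[z₁]/z₁ˡⁿ − z̄₂[z₂]` when the jumps are nonzero. -/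
theorem entropy_variable_jump_identities (γ ρL uL pL ρR uR pR : ℝ)
    (hγ : 1 < γ) (hρL : 0 < ρL) (hpL : 0 < pL) (hρR : 0 < ρR) (hpR : 0 < pR) :
    let SL : ℝ := Real.log pL - γ * Real.log ρL
    let SR : ℝ := Real.log pR - γ * Real.log ρR
    let v1L : ℝ := (γ - SL) / (γ - 1) - ρL * uL ^ 2 / (2 * pL)
    let v2L : ℝ := ρL * uL / pL
    let v3L : ℝ := -(ρL / pL)
    let v1R : ℝ := (γ - SR) / (γ - 1) - ρR * uR ^ 2 / (2 * pR)
    let v2R : ℝ := ρR * uR / pR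
    let v3R : ℝ := -(ρR / pR)
    let z1L : ℝ := Real.sqrt (ρL / pL)
    let z2L : ℝ := uL * Real.sqrt (ρL / pL)
    let z3L : ℝ := Real.sqrt (ρL * pL)
    let z1R : ℝ := Real.sqrt (ρR / pR)
    let z2R : ℝ := uR * Real.sqrt (ρR / pR)
    let z3R : ℝ := Real.sqrt (ρR * pR)
    let z1bar : ℝ := (z1L + z1R) / 2
    let z2bar : ℝ := (z2L + z2R) / 2
    let z1ln : ℝ := (z1R - z1L) / (Real.log z1R - Real.log z1L)
    let z3ln : ℝ := (z3R - z3L) / (Real.log z3R - Real.log z3L)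
    (v2R - v2L = z1bar * (z2R - z2L) + z2bar * (z1R - z1L)) ∧
    (v3R - v3L = -2 * z1bar * (z1R - z1L)) ∧
    (z1L ≠ z1R → z3L ≠ z3R →
      v1R - v1L = (z3R - z3L) / z3ln
        - ((1 + γ) / (1 - γ)) * (z1R - z1L) / z1ln
        - z2bar * (z2R - z2L)) := by
  intro SL SR v1L v2L v3L v1R v2R v3R z1L z2L z3L z1R z2R z3R z1bar z2bar z1ln z3ln
  refine ⟨?_, ?_, fun h1 h3 => ?_⟩
  · have hv2L : v2L = z1L * z2L := mul_div_eq_sqrt_div_mul_mul_sqrt_div hρL hpL uL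
    have hv2R : v2R = z1R * z2R := mul_div_eq_sqrt_div_mul_mul_sqrt_div hρR hpR uR
    rw [hv2L, hv2R]
    exact mul_sub_mul_eq_mean_mul_sub_add_mean_mul_sub z1L z2L z1R z2R
  · have hv3L : v3L = -z1L ^ 2 := by rw [sq_sqrt_div_of_pos hρL hpL]
    have hv3R : v3R = -z1R ^ 2 := by rw [sq_sqrt_div_of_pos hρR hpR]
    rw [hv3L, hv3R]
    ring
  · have hv1L : v1L = _ := entropyV1_eq_roe hρL hpL hγ.ne' uL
    have hv1R : v1R = _ := entropyV1_eq_roe hρR hpR hγ.ne' uR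
    have hz1 : (z1R - z1L) / z1ln = log z1R - log z1L := div_div_cancel₀ (sub_ne_zero.2 h1.symm)
    have hz3 : (z3R - z3L) / z3ln = log z3R - log z3L := div_div_cancel₀ (sub_ne_zero.2 h3.symm)
    rw [hv1L, hv1R, hz3, mul_div_assoc, hz1]
    ring
end

section
/- Let γ > 1 and let (ρ_L, u_L, p_L) and (ρ_R, u_R, p_R) be two states with ρ_L, ρ_R, p_L, p_R > 0. Define for each state z₁ = √(ρ/p), z₂ = u√(ρ/p), z₃ = √(ρp) and the entropy variables v = ((γ − S)/(γ−1) − ρu²/(2p), ρu/p, −ρ/p) with S = log p − γ log ρ. Assume z₁_L ≠ z₁_R and z₃_L ≠ z₃_R, and define the Roe-type entropy conservative temporal flux u* = (u₁, u₂, u₃) by u₁ = z̄₁ z₃^{ln}, u₂ = u₁ z̄₂/z̄₁, and u₃ = (1/(2z̄₁)) (−u₁ ((1+γ)/(1−γ)) / z₁^{ln} + u₂ z̄₂ − z̄₃). Then ⟨v_R − v_L, u*⟩ = ρ_R − ρ_L, i.e., u* satisfies the entropy conservation condition [v]·u* = [φ] with temporal flux potential φ = ρ. -/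
/-!
In the Roe variables `z₁ = √(ρ/p)`, `z₂ = u z₁`, `z₃ = √(ρp)` the density is `z₁ z₃` and the
entropy variables are `v = ((γ - S)/(γ - 1) - z₂²/2, z₁ z₂, -z₁²)` with
`S = (1 - γ) log z₃ - (1 + γ) log z₁`, so all jumps `[v]` are jumps of products and logarithms.
The discrete product rule `[ab] = ā [b] + b̄ [a]` and the identity `a^{ln} [log a] = [a]` then
make `[v]·u*` collapse: `u₂` is chosen so that the `z₂`-terms cancel, `u₃` so that the
`[log z₁]`-terms cancel, and what is left is `z̄₁ z₃^{ln} [log z₃] + z̄₃ [z₁] = [z₁ z₃] = [ρ]`.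
-/

open Real Matrix

noncomputable def logMean (a b : ℝ) : ℝ := (b - a) / (log b - log a)

noncomputable def entropyVars (γ ρ u p : ℝ) : Fin 3 → ℝ :=
  ![(γ - (log p - γ * log ρ)) / (γ - 1) - ρ * u ^ 2 / (2 * p), ρ * u / p, -(ρ / p)]

noncomputable def roeEntropyVars (γ z₁ z₂ z₃ : ℝ) : Fin 3 → ℝ :=
  ![(γ - ((1 - γ) * log z₃ - (1 + γ) * log z₁)) / (γ - 1) - z₂ ^ 2 / 2, z₁ * z₂, -z₁ ^ 2]

noncomputable def roeTemporalFlux (γ z₁L z₂L z₃L z₁R z₂R z₃R : ℝ) : Fin 3 → ℝ :=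
  let z₁bar := (z₁L + z₁R) / 2
  let z₂bar := (z₂L + z₂R) / 2
  let z₃bar := (z₃L + z₃R) / 2
  let u₁ := z₁bar * logMean z₃L z₃R
  let u₂ := u₁ * z₂bar / z₁bar
  ![u₁, u₂, (1 / (2 * z₁bar)) * (-u₁ * ((1 + γ) / (1 - γ)) / logMean z₁L z₁R + u₂ * z₂bar - z₃bar)]

theorem log_sub_log_eq_div_logMean {a b : ℝ} (h : log a ≠ log b) :
    log b - log a = (b - a) / logMean a b := by
  have hab : a ≠ b := fun hab => h (congrArg log hab)
  rw [logMean, div_div_eq_mul_div, mul_div_cancel_left₀ _ (sub_ne_zero.2 hab.symm)]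

theorem logMean_ne_zero {a b : ℝ} (h : log a ≠ log b) : logMean a b ≠ 0 :=
  div_ne_zero (sub_ne_zero.2 fun hab => h (congrArg log hab).symm) (sub_ne_zero.2 h.symm)

theorem roeEntropyVars_sub_roeEntropyVars {γ : ℝ} (hγ : γ ≠ 1) (z₁L z₂L z₃L z₁R z₂R z₃R : ℝ) :
    roeEntropyVars γ z₁R z₂R z₃R - roeEntropyVars γ z₁L z₂L z₃L =
      ![(log z₃R - log z₃L) + (1 + γ) / (γ - 1) * (log z₁R - log z₁L)
          - (z₂L + z₂R) / 2 * (z₂R - z₂L),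
        (z₁L + z₁R) / 2 * (z₂R - z₂L) + (z₂L + z₂R) / 2 * (z₁R - z₁L),
        -(2 * ((z₁L + z₁R) / 2 * (z₁R - z₁L)))] := by
  have hγ₁ : γ - 1 ≠ 0 := sub_ne_zero.2 hγ
  ext i
  fin_cases i <;>
    simp only [roeEntropyVars, Fin.zero_eta, Fin.mk_one, Fin.reduceFinMk, Fin.isValue,
      Pi.sub_apply, cons_val_zero, cons_val_one, cons_val, Nat.succ_eq_add_one, Nat.reduceAdd] <;>
    field_simp <;> ring

theorem roeEntropyVars_sub_dotProduct_roeTemporalFlux {γ z₁L z₂L z₃L z₁R z₂R z₃R : ℝ}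
    (hγ : γ ≠ 1) (hz₁bar : z₁L + z₁R ≠ 0)
    (hlog₁ : log z₁L ≠ log z₁R) (hlog₃ : log z₃L ≠ log z₃R) :
    (roeEntropyVars γ z₁R z₂R z₃R - roeEntropyVars γ z₁L z₂L z₃L) ⬝ᵥ
        roeTemporalFlux γ z₁L z₂L z₃L z₁R z₂R z₃R = z₁R * z₃R - z₁L * z₃L := by
  have hm₁ := logMean_ne_zero hlog₁
  have hm₃ := logMean_ne_zero hlog₃
  have hγ₁ : γ - 1 ≠ 0 := sub_ne_zero.2 hγ
  have hγ₂ : 1 - γ ≠ 0 := sub_ne_zero.2 hγ.symm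
  rw [roeEntropyVars_sub_roeEntropyVars hγ, log_sub_log_eq_div_logMean hlog₁,
    log_sub_log_eq_div_logMean hlog₃]
  simp only [dotProduct, Fin.sum_univ_three, roeTemporalFlux, cons_val_zero, cons_val_one,
    cons_val_two, head_cons, tail_cons]
  field_simp
  ring

theorem entropyVars_eq_roeEntropyVars (γ u : ℝ) {ρ p : ℝ} (hρ : 0 < ρ) (hp : 0 < p) :
    entropyVars γ ρ u p = roeEntropyVars γ √(ρ / p) (u * √(ρ / p)) √(ρ * p) := by
  have hz₁ : √(ρ / p) ^ 2 = ρ / p := sq_sqrt (by positivity)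
  have hS : log p - γ * log ρ = (1 - γ) * log √(ρ * p) - (1 + γ) * log √(ρ / p) := by
    rw [log_sqrt (by positivity), log_sqrt (by positivity), log_mul hρ.ne' hp.ne',
      log_div hρ.ne' hp.ne']
    ring
  have hz₁z₂ : √(ρ / p) * (u * √(ρ / p)) = ρ * u / p := by rw [mul_left_comm, ← sq, hz₁]; ring
  have hz₂ : (u * √(ρ / p)) ^ 2 / 2 = ρ * u ^ 2 / (2 * p) := by rw [mul_pow, hz₁]; ring
  rw [entropyVars, roeEntropyVars, hS, hz₁z₂, hz₂, hz₁]

theorem sqrt_div_mul_sqrt_mul {ρ p : ℝ} (hρ : 0 ≤ ρ) (hp : 0 < p) : √(ρ / p) * √(ρ * p) = ρ := by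
  have h : ρ / p * (ρ * p) = ρ ^ 2 := by field_simp
  rw [← sqrt_mul (by positivity), h, sqrt_sq hρ]

/-- The Roe-type entropy conservative temporal flux `u* = (u₁, u₂, u₃)` for the 1D
Euler equations satisfies the entropy conservation condition `[v]·u* = [φ]` with
temporal flux potential `φ = ρ`. -/
theorem roe_temporal_flux_is_entropy_conservative (γ ρL uL pL ρR uR pR : ℝ)
    (hγ : 1 < γ) (hρL : 0 < ρL) (hpL : 0 < pL) (hρR : 0 < ρR) (hpR : 0 < pR) :
    let SL : ℝ := Real.log pL - γ * Real.log ρL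
    let SR : ℝ := Real.log pR - γ * Real.log ρR
    let vL : Fin 3 → ℝ :=
      ![(γ - SL) / (γ - 1) - ρL * uL ^ 2 / (2 * pL), ρL * uL / pL, -(ρL / pL)]
    let vR : Fin 3 → ℝ :=
      ![(γ - SR) / (γ - 1) - ρR * uR ^ 2 / (2 * pR), ρR * uR / pR, -(ρR / pR)]
    let z1L : ℝ := Real.sqrt (ρL / pL)
    let z2L : ℝ := uL * Real.sqrt (ρL / pL)
    let z3L : ℝ := Real.sqrt (ρL * pL)
    let z1R : ℝ := Real.sqrt (ρR / pR)
    let z2R : ℝ := uR * Real.sqrt (ρR / pR)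
    let z3R : ℝ := Real.sqrt (ρR * pR)
    let z1bar : ℝ := (z1L + z1R) / 2
    let z2bar : ℝ := (z2L + z2R) / 2
    let z3bar : ℝ := (z3L + z3R) / 2
    let z1ln : ℝ := (z1R - z1L) / (Real.log z1R - Real.log z1L)
    let z3ln : ℝ := (z3R - z3L) / (Real.log z3R - Real.log z3L)
    let u1 : ℝ := z1bar * z3ln
    let u2 : ℝ := u1 * z2bar / z1bar
    let u3 : ℝ := (1 / (2 * z1bar)) *
      (-u1 * ((1 + γ) / (1 - γ)) / z1ln + u2 * z2bar - z3bar)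
    z1L ≠ z1R → z3L ≠ z3R →
      (vR - vL) ⬝ᵥ ![u1, u2, u3] = ρR - ρL := by
  intro SL SR vL vR z1L z2L z3L z1R z2R z3R z1bar z2bar z3bar z1ln z3ln u1 u2 u3 h₁ h₃
  have hz₁L : 0 < z1L := sqrt_pos.2 (div_pos hρL hpL)
  have hz₁R : 0 < z1R := sqrt_pos.2 (div_pos hρR hpR)
  have hz₃L : 0 < z3L := sqrt_pos.2 (mul_pos hρL hpL)
  have hz₃R : 0 < z3R := sqrt_pos.2 (mul_pos hρR hpR)
  have hlog₁ : log z1L ≠ log z1R := fun h => h₁ (log_injOn_pos hz₁L hz₁R h)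
  have hlog₃ : log z3L ≠ log z3R := fun h => h₃ (log_injOn_pos hz₃L hz₃R h)
  have hvL : vL = roeEntropyVars γ z1L z2L z3L := entropyVars_eq_roeEntropyVars γ uL hρL hpL
  have hvR : vR = roeEntropyVars γ z1R z2R z3R := entropyVars_eq_roeEntropyVars γ uR hρR hpR
  rw [hvL, hvR, ← sqrt_div_mul_sqrt_mul hρL.le hpL, ← sqrt_div_mul_sqrt_mul hρR.le hpR]
  exact roeEntropyVars_sub_dotProduct_roeTemporalFlux hγ.ne' (by positivity) hlog₁ hlog₃
end

section
/- Let N ≥ 1 and let u : ℝ^N → ℝ^N be continuously differentiable with derivative H(w) = Du(w) (a continuous linear map ℝ^N → ℝ^N). For v_L, v_R ∈ ℝ^N set Δv = v_R − v_L and v(ξ) = v_L + ξΔv. Then ∫₀¹ u(v(ξ)) dξ = ½(u(v_L) + u(v_R)) − (∫₀¹ (ξ − ½) H(v(ξ)) dξ)(Δv); that is, Tadmor's entropy conservative temporal flux admits the viscosity form with viscosity matrix ∫₀¹ (ξ − ½) H(v(ξ)) dξ. -/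
/-! Along the segment `v(ξ) = v_L + ξ Δv` the map `g ξ = u (v ξ)` has derivative `H(v ξ) Δv`.
Integrating `g` by parts against `ξ - ½`, an antiderivative of `1` taking the values `∓½` at the
endpoints, gives `∫₀¹ g = ½ (g 0 + g 1) - ∫₀¹ (ξ - ½) g'(ξ) dξ`; finally evaluation at `Δv`
commutes with the integral of the Jacobians. -/

open MeasureTheory intervalIntegral

variable {E F : Type*} [NormedAddCommGroup E] [NormedSpace ℝ E]
  [NormedAddCommGroup F] [NormedSpace ℝ F]

theorem integral_zero_one_eq_midpoint_sub_integral_smul_deriv [CompleteSpace F] {g g' : ℝ → F}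
    (hg : ∀ x ∈ Set.uIcc (0 : ℝ) 1, HasDerivAt g (g' x) x)
    (hg' : IntervalIntegrable g' volume 0 1) :
    ∫ x in (0 : ℝ)..1, g x = (2 : ℝ)⁻¹ • (g 0 + g 1) - ∫ x in (0 : ℝ)..1, (x - 2⁻¹) • g' x := by
  have hparts := integral_smul_deriv_eq_deriv_smul (u := fun x : ℝ => x - 2⁻¹) (u' := fun _ => 1)
    (fun x _ => (hasDerivAt_id x).sub_const _) hg intervalIntegrable_const hg'
  simp only [one_smul] at hparts
  rw [hparts]
  norm_num
  module

theorem hasDerivAt_comp_segment {f : E → F} (a b : E) (ξ : ℝ)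
    (hf : DifferentiableAt ℝ f (a + ξ • (b - a))) :
    HasDerivAt (fun ξ : ℝ => f (a + ξ • (b - a))) (fderiv ℝ f (a + ξ • (b - a)) (b - a)) ξ := by
  have hsegment : HasDerivAt (fun ξ : ℝ => a + ξ • (b - a)) (b - a) ξ := by
    simpa using ((hasDerivAt_id ξ).smul_const (b - a)).const_add a
  exact hf.hasFDerivAt.comp_hasDerivAt ξ hsegment

theorem integral_segment_eq_midpoint_sub_integral_smul_fderiv [CompleteSpace F] {f : E → F}
    (hf : ContDiff ℝ 1 f) (a b : E) :
    ∫ ξ in (0 : ℝ)..1, f (a + ξ • (b - a)) =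
      (2 : ℝ)⁻¹ • (f a + f b) -
      (∫ ξ in (0 : ℝ)..1, (ξ - 2⁻¹) • fderiv ℝ f (a + ξ • (b - a))) (b - a) := by
  have hDf := hf.continuous_fderiv one_ne_zero
  have hjacobian : Continuous fun ξ : ℝ => (ξ - 2⁻¹) • fderiv ℝ f (a + ξ • (b - a)) := by
    fun_prop
  have hderiv : Continuous fun ξ : ℝ => fderiv ℝ f (a + ξ • (b - a)) (b - a) := by fun_prop
  rw [ContinuousLinearMap.intervalIntegral_apply (hjacobian.intervalIntegrable 0 1)]
  simpa using integral_zero_one_eq_midpoint_sub_integral_smul_deriv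
    (fun ξ _ => hasDerivAt_comp_segment a b ξ (hf.differentiable one_ne_zero _))
    (hderiv.intervalIntegrable 0 1)

theorem tadmor_temporal_flux_viscosity_form_general (N : ℕ)
    (u : EuclideanSpace ℝ (Fin N) → EuclideanSpace ℝ (Fin N))
    (hu : ContDiff ℝ 1 u)
    (vL vR : EuclideanSpace ℝ (Fin N)) :
    (∫ ξ in (0:ℝ)..1, u (vL + ξ • (vR - vL))) =
      (2:ℝ)⁻¹ • (u vL + u vR) -
      (∫ ξ in (0:ℝ)..1, (ξ - 2⁻¹) • fderiv ℝ u (vL + ξ • (vR - vL)))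
        (vR - vL) :=
  integral_segment_eq_midpoint_sub_integral_smul_fderiv hu vL vR

/-- Viscosity form of Tadmor's entropy conservative temporal flux: for a `C¹` map
`u` with Jacobian `H(w) = Du(w)`, the segment average `∫₀¹ u(v(ξ)) dξ` equals the
arithmetic mean `½(u(v_L) + u(v_R))` minus the matrix `∫₀¹ (ξ − ½) H(v(ξ)) dξ`
applied to the jump `Δv = v_R − v_L`. -/
theorem tadmor_temporal_flux_viscosity_form (N : ℕ) (hN : 1 ≤ N)
    (u : EuclideanSpace ℝ (Fin N) → EuclideanSpace ℝ (Fin N))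
    (hu : ContDiff ℝ 1 u)
    (vL vR : EuclideanSpace ℝ (Fin N)) :
    (∫ ξ in (0:ℝ)..1, u (vL + ξ • (vR - vL))) =
      (2:ℝ)⁻¹ • (u vL + u vR) -
      (∫ ξ in (0:ℝ)..1, (ξ - 2⁻¹) • fderiv ℝ u (vL + ξ • (vR - vL)))
        (vR - vL) :=
  tadmor_temporal_flux_viscosity_form_general N u hu vL vR
end

section
/- Let N ≥ 1 and let u : ℝ^N → ℝ^N be continuously differentiable such that for every w ∈ ℝ^N the derivative H(w) = Du(w) is symmetric and positive definite (⟨H(w)x, x⟩ > 0 for all x ≠ 0). Then for any v_L, v_R ∈ ℝ^N with v_L ≠ v_R, ⟨v_R − v_L, ∫₀¹ u(v_L + ξ(v_R − v_L)) dξ − u(v_L)⟩ > 0; that is, upwinding in time strictly produces entropy whenever there is a jump in states. -/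
/-! With `Δ = v_R - v_L` and `g ξ = ⟪Δ, u (v_L + ξ Δ)⟫`, the entropy production is
`∫₀¹ (g ξ - g 0) dξ`. Since `g' ξ = ⟪Du(v_L + ξ Δ) Δ, Δ⟫ > 0`, `g` is strictly increasing,
so the integrand is positive on `(0, 1]`. -/

open RealInnerProductSpace MeasureTheory

variable {E : Type*} [NormedAddCommGroup E] [InnerProductSpace ℝ E]

theorem strictMono_inner_comp_line {u : E → E} (hu : Differentiable ℝ u) (a Δ : E)
    (hpos : ∀ w, 0 < ⟪fderiv ℝ u w Δ, Δ⟫) : StrictMono fun s : ℝ => ⟪Δ, u (a + s • Δ)⟫ := by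
  have hderiv (s : ℝ) :
      HasDerivAt (fun s : ℝ => ⟪Δ, u (a + s • Δ)⟫) ⟪Δ, fderiv ℝ u (a + s • Δ) Δ⟫ s := by
    have hline : HasDerivAt (fun s : ℝ => a + s • Δ) Δ s := by
      simpa using ((hasDerivAt_id s).smul_const Δ).const_add a
    simpa using (hasDerivAt_const s Δ).inner ℝ ((hu _).hasFDerivAt.comp_hasDerivAt s hline)
  refine strictMono_of_deriv_pos fun s => ?_
  rw [(hderiv s).deriv, real_inner_comm]
  exact hpos _

theorem mul_lt_intervalIntegral_of_strictMonoOn {g : ℝ → ℝ} {a b : ℝ} (hab : a < b)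
    (hg : ContinuousOn g (Set.Icc a b)) (hmono : StrictMonoOn g (Set.Icc a b)) :
    (b - a) * g a < ∫ x in a..b, g x := by
  have hint : IntervalIntegrable g volume a b := hg.intervalIntegrable_of_Icc hab.le
  have hpos : 0 < ∫ x in a..b, (g x - g a) :=
    intervalIntegral.intervalIntegral_pos_of_pos_on (hint.sub intervalIntegrable_const)
      (fun x hx => sub_pos.mpr (hmono ⟨le_rfl, hab.le⟩ (Set.Ioo_subset_Icc_self hx) hx.1)) hab
  rwa [intervalIntegral.integral_sub hint intervalIntegrable_const,
    intervalIntegral.integral_const, smul_eq_mul, sub_pos] at hpos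

theorem upwind_in_time_produces_entropy_general (N : ℕ)
    (u : EuclideanSpace ℝ (Fin N) → EuclideanSpace ℝ (Fin N))
    (hu : ContDiff ℝ 1 u)
    (hpos : ∀ w x, x ≠ 0 → 0 < ⟪fderiv ℝ u w x, x⟫)
    (vL vR : EuclideanSpace ℝ (Fin N)) (hne : vL ≠ vR) :
    0 < ⟪vR - vL, (∫ ξ in (0:ℝ)..1, u (vL + ξ • (vR - vL))) - u vL⟫ := by
  set Δ := vR - vL
  have hΔ : Δ ≠ 0 := sub_ne_zero.mpr hne.symm
  have hcont : Continuous fun ξ : ℝ => u (vL + ξ • Δ) := hu.continuous.comp (by fun_prop)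
  have hswap : ⟪Δ, ∫ ξ in (0:ℝ)..1, u (vL + ξ • Δ)⟫ = ∫ ξ in (0:ℝ)..1, ⟪Δ, u (vL + ξ • Δ)⟫ :=
    ((innerSL ℝ Δ).intervalIntegral_comp_comm (hcont.intervalIntegrable 0 1)).symm
  have hmono := strictMono_inner_comp_line (hu.differentiable one_ne_zero) vL Δ
    fun w => hpos w Δ hΔ
  have hlt := mul_lt_intervalIntegral_of_strictMonoOn zero_lt_one
    (continuous_const.inner hcont).continuousOn (hmono.strictMonoOn _)
  rw [inner_sub_right, hswap, sub_pos]
  simpa using hlt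

/-- Upwinding in time strictly produces entropy whenever there is a jump in states:
if `u` is `C¹` with symmetric positive definite Jacobian everywhere, then for
`v_L ≠ v_R` the entropy production `⟨Δv, u* − u(v_L)⟩` is strictly positive, where
`u* = ∫₀¹ u(v_L + ξΔv) dξ` is Tadmor's entropy conservative temporal flux. -/
theorem upwind_in_time_produces_entropy (N : ℕ) (hN : 1 ≤ N)
    (u : EuclideanSpace ℝ (Fin N) → EuclideanSpace ℝ (Fin N))
    (hu : ContDiff ℝ 1 u)
    (hsymm : ∀ w x y, ⟪fderiv ℝ u w x, y⟫ = ⟪x, fderiv ℝ u w y⟫)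
    (hpos : ∀ w x, x ≠ 0 → 0 < ⟪fderiv ℝ u w x, x⟫)
    (vL vR : EuclideanSpace ℝ (Fin N)) (hne : vL ≠ vR) :
    0 < ⟪vR - vL, (∫ ξ in (0:ℝ)..1, u (vL + ξ • (vR - vL))) - u vL⟫ :=
  upwind_in_time_produces_entropy_general N u hu hpos vL vR hne
end
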